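/- arXiv:2404.11258 — 4 statements merged into one kernel-verified Lean document; each statement's English description precedes it below -/
import Mathlib

section
/- With Θ(x1, x2) = arccos( ((1+e^{x1})^2 + (1+e^{x2})^2 - (e^{x1}+e^{x2})^2) / (2(1+e^{x1})(1+e^{x2})) ), the partial derivative satisfies ∂Θ/∂x1 = (1/(1+e^{x1})) · sqrt( e^{x1+x2} / (1 + e^{x1} + e^{x2}) ) for all real x1, x2. -/
/-!
Writing `σ` for the logistic sigmoid `eˣ / (1 + eˣ)`, the law-of-cosines quotient inside `Θ`
simplifies to `1 - 2 σ(x₁) σ(x₂)`. Since `t ↦ arccos (1 - 2t)` has derivative `1 / √(t (1 - t))`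
and `σ' = σ (1 - σ)`, the chain rule gives `∂Θ/∂x₁ = (1 - σ(x₁)) √(t / (1 - t))` with
`t = σ(x₁) σ(x₂)`, and `t / (1 - t) = e^{x₁ + x₂} / (1 + e^{x₁} + e^{x₂})`.
-/

open Real

/-- The angle function `Θ(x1, x2)`. -/
noncomputable def Theta (x1 x2 : ℝ) : ℝ :=
  Real.arccos (((1 + Real.exp x1) ^ 2 + (1 + Real.exp x2) ^ 2 -
      (Real.exp x1 + Real.exp x2) ^ 2) /
    (2 * (1 + Real.exp x1) * (1 + Real.exp x2)))

namespace Real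

lemma sigmoid_eq_exp_div (x : ℝ) : sigmoid x = exp x / (1 + exp x) := by
  rw [sigmoid_def, exp_neg]
  field

lemma one_sub_sigmoid (x : ℝ) : 1 - sigmoid x = 1 / (1 + exp x) := by
  rw [sigmoid_eq_exp_div]
  field

lemma one_sub_sigmoid_mul_sigmoid (x1 x2 : ℝ) :
    1 - sigmoid x1 * sigmoid x2 = (1 + exp x1 + exp x2) / ((1 + exp x1) * (1 + exp x2)) := by
  rw [sigmoid_eq_exp_div, sigmoid_eq_exp_div]
  field

lemma sigmoid_mul_sigmoid_div (x1 x2 : ℝ) :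
    sigmoid x1 * sigmoid x2 / (1 - sigmoid x1 * sigmoid x2) =
      exp (x1 + x2) / (1 + exp x1 + exp x2) := by
  rw [one_sub_sigmoid_mul_sigmoid, sigmoid_eq_exp_div, sigmoid_eq_exp_div, exp_add]
  field

lemma hasDerivAt_arccos_one_sub_two_mul {t : ℝ} (h₀ : 0 < t) (h₁ : t < 1) :
    HasDerivAt (fun t => arccos (1 - 2 * t)) (1 / √(t * (1 - t))) t := by
  have hsqrt : √(1 - (1 - 2 * t) ^ 2) = 2 * √(t * (1 - t)) := by
    rw [show 1 - (1 - 2 * t) ^ 2 = 2 ^ 2 * (t * (1 - t)) by ring, sqrt_mul (by positivity),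
      sqrt_sq zero_le_two]
  refine ((hasDerivAt_arccos (by linarith) (by linarith)).comp t
    (((hasDerivAt_id' t).const_mul 2).const_sub 1)).congr_deriv ?_
  rw [hsqrt]
  field

lemma div_sqrt_mul_eq_sqrt_div {t : ℝ} (ht : 0 < t) (u : ℝ) : t / √(t * u) = √(t / u) := by
  rw [sqrt_mul ht.le, sqrt_div ht.le, ← div_div, div_sqrt]

end Real

lemma theta_eq_arccos_sigmoid (x1 x2 : ℝ) :
    Theta x1 x2 = arccos (1 - 2 * (sigmoid x1 * sigmoid x2)) := by
  rw [Theta, sigmoid_eq_exp_div, sigmoid_eq_exp_div]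
  congr 1
  field

lemma hasDerivAt_theta_fst (x1 x2 : ℝ) :
    HasDerivAt (fun s => Theta s x2)
      ((1 - sigmoid x1) * √(sigmoid x1 * sigmoid x2 / (1 - sigmoid x1 * sigmoid x2))) x1 := by
  set t := sigmoid x1 * sigmoid x2
  have ht₀ : 0 < t := mul_pos (sigmoid_pos x1) (sigmoid_pos x2)
  have ht₁ : t < 1 := mul_lt_one_of_nonneg_of_lt_one_left (sigmoid_nonneg x1) (sigmoid_lt_one x1)
    (sigmoid_le_one x2)
  have h := (hasDerivAt_arccos_one_sub_two_mul ht₀ ht₁).comp x1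
    ((hasDerivAt_sigmoid x1).mul_const (sigmoid x2))
  simp only [Function.comp_def, ← theta_eq_arccos_sigmoid] at h
  refine h.congr_deriv ?_
  rw [← div_sqrt_mul_eq_sqrt_div ht₀]
  ring

theorem stmt_2 (x1 x2 : ℝ) :
    deriv (fun s => Theta s x2) x1 =
      (1 / (1 + Real.exp x1)) *
        Real.sqrt (Real.exp (x1 + x2) / (1 + Real.exp x1 + Real.exp x2)) := by
  rw [(hasDerivAt_theta_fst x1 x2).deriv, one_sub_sigmoid, sigmoid_mul_sigmoid_div]
end

section
/- For all real x1, x2, the partial derivative of Θ(x1, x2) = arccos( ((1+e^{x1})^2 + (1+e^{x2})^2 - (e^{x1}+e^{x2})^2) / (2(1+e^{x1})(1+e^{x2})) ) with respect to x1 satisfies 0 < ∂Θ/∂x1 < 1. -/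
/-!
With `a = e^{x1}` and `b = e^{x2}` the law of cosines reads
`cos Θ = 1 - (2b / (1 + b)) σ(x1)` with the logistic function `σ(s) = e^s / (1 + e^s)`,
so the chain rule and `σ' = e^s / (1 + e^s)^2` give the closed form
`∂Θ/∂x1 = √(ab / ((1 + a)^2 (1 + a + b)))`.
The radicand is positive and smaller than `1` because `a < (1 + a)^2` and `b < 1 + a + b`.
-/

open Real

lemma cos_angle_eq {a b : ℝ} (ha : 1 + a ≠ 0) (hb : 1 + b ≠ 0) :
    ((1 + a) ^ 2 + (1 + b) ^ 2 - (a + b) ^ 2) / (2 * (1 + a) * (1 + b)) =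
      1 - 2 * b / (1 + b) * (a / (1 + a)) := by
  field_simp
  ring

lemma Theta_eq_arccos (x1 x2 : ℝ) :
    Theta x1 x2 =
      arccos (1 - 2 * exp x2 / (1 + exp x2) * (exp x1 / (1 + exp x1))) := by
  rw [Theta, cos_angle_eq (by positivity) (by positivity)]

lemma hasDerivAt_exp_div_one_add_exp (x : ℝ) :
    HasDerivAt (fun s => exp s / (1 + exp s)) (exp x / (1 + exp x) ^ 2) x := by
  refine ((hasDerivAt_exp x).div ((hasDerivAt_exp x).const_add 1) (by positivity)).congr_deriv ?_
  ring

lemma one_sub_sq_cos_angle {a b : ℝ} (ha : 0 < a) (hb : 0 < b) :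
    1 - (1 - 2 * b / (1 + b) * (a / (1 + a))) ^ 2 =
      (2 * b / (1 + b) * (a / (1 + a) ^ 2)) ^ 2 / (a * b / ((1 + a) ^ 2 * (1 + a + b))) := by
  field_simp
  ring

lemma mul_div_sq_mul_lt_one {a b : ℝ} (ha : 0 < a) (hb : 0 < b) :
    a * b / ((1 + a) ^ 2 * (1 + a + b)) < 1 := by
  rw [div_lt_one (by positivity)]
  have ha' : a < (1 + a) ^ 2 := by nlinarith
  have hb' : b < 1 + a + b := by linarith
  exact mul_lt_mul'' ha' hb' ha.le hb.le

lemma hasDerivAt_Theta_left (x1 x2 : ℝ) :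
    HasDerivAt (fun s => Theta s x2)
      (√(exp x1 * exp x2 / ((1 + exp x1) ^ 2 * (1 + exp x1 + exp x2)))) x1 := by
  set a := exp x1
  set b := exp x2
  have ha : 0 < a := exp_pos x1
  have hb : 0 < b := exp_pos x2
  set k := 2 * b / (1 + b)
  set c := 1 - k * (a / (1 + a))
  set Q := a * b / ((1 + a) ^ 2 * (1 + a + b))
  have hc : 1 - c ^ 2 = (k * (a / (1 + a) ^ 2)) ^ 2 / Q := one_sub_sq_cos_angle ha hb
  have hc_pos : 0 < 1 - c ^ 2 := by rw [hc]; positivity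
  have hc_ne : c ≠ -1 ∧ c ≠ 1 := by
    constructor <;> intro h <;> rw [h] at hc_pos <;> norm_num at hc_pos
  have hcos : HasDerivAt (fun s => 1 - k * (exp s / (1 + exp s))) (-(k * (a / (1 + a) ^ 2))) x1 :=
    ((hasDerivAt_exp_div_one_add_exp x1).const_mul k).const_sub 1
  have hTheta := (hasDerivAt_arccos hc_ne.1 hc_ne.2).comp x1 hcos
  have hfun : (fun s => Theta s x2) = arccos ∘ fun s => 1 - k * (exp s / (1 + exp s)) :=
    funext fun s => Theta_eq_arccos s x2
  rw [hfun]
  refine hTheta.congr_deriv ?_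
  have hsqrt : √(1 - c ^ 2) = k * (a / (1 + a) ^ 2) / √Q := by
    rw [hc, sqrt_div' _ (by positivity), sqrt_sq (by positivity)]
  have hk : k ≠ 0 := by positivity
  rw [hsqrt]
  field_simp

theorem stmt_3 (x1 x2 : ℝ) :
    0 < deriv (fun s => Theta s x2) x1 ∧ deriv (fun s => Theta s x2) x1 < 1 := by
  have ha := exp_pos x1
  have hb := exp_pos x2
  rw [(hasDerivAt_Theta_left x1 x2).deriv]
  refine ⟨sqrt_pos.2 (by positivity), ?_⟩
  rw [sqrt_lt' one_pos, one_pow]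
  exact mul_div_sq_mul_lt_one ha hb
end

section
/- Let G = (V, E) be a connected graph with uniformly bounded positive symmetric edge weights η (i.e., 0 < η_{vw} = η_{wv} ≤ C for all edges) and uniformly bounded vertex degrees, such that balls satisfy Vol(B_n(v)) ≤ C' n² for all n ≥ 1 (quadratic volume growth). Then every positive superharmonic function on (G, η) is constant. -/
/-!
If `u > 0` is superharmonic, summing `(φ² / u)(v) - (φ² / u)(w)` against `u v - u w` over the
edges pairs `φ² / u ≥ 0` with `-Δu ≥ 0`, which gives the discrete Picone inequality
`∑ η (φ v u w - φ w u v)² / (u v u w) ≤ ∑ η (φ v - φ w)²` for finitely supported `φ`.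
Test it with the logarithmic cutoff `φ = (1 - log d(a, ·) / log R)⁺`: on the dyadic shell
`2ᵏ⁻¹ < d ≤ 2ᵏ` its gradient is `O(2⁻ᵏ / log R)` while the shell has volume `O(4ᵏ)`, so each of
the `log₂ R + 1` shells contributes `O(1 / log² R)` to the energy. Hence the term
`η a b (u b - u a)² / (u a u b)` of any edge `ab` is `O(1 / log R)` for every `R`, hence zero.
-/

open Finset Filter

-- `Real.log 0 = 0`, so `logCutoff R 0 = 1`.
noncomputable def logCutoff (R : ℝ) (n : ℕ) : ℝ := max 0 (1 - Real.log n / Real.log R)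

theorem logCutoff_of_le_one (R : ℝ) {n : ℕ} (hn : n ≤ 1) : logCutoff R n = 1 := by
  interval_cases n <;> simp [logCutoff]

theorem logCutoff_of_le {R : ℝ} (hR : 1 < R) {n : ℕ} (hn : R ≤ n) : logCutoff R n = 0 := by
  have hlog : Real.log R ≤ Real.log n := Real.log_le_log (by linarith) hn
  have : 1 ≤ Real.log n / Real.log R := (one_le_div (Real.log_pos hR)).2 hlog
  exact max_eq_left (by linarith)

theorem abs_logCutoff_sub_le {R : ℝ} (hR : 1 < R) (m n : ℕ) :
    |logCutoff R m - logCutoff R n| ≤ |Real.log m - Real.log n| / Real.log R := by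
  unfold logCutoff
  rw [max_comm 0, max_comm 0]
  refine (abs_max_sub_max_le_abs _ _ _).trans_eq ?_
  rw [← abs_of_pos (Real.log_pos hR), ← abs_div, abs_of_pos (Real.log_pos hR), abs_sub_comm]
  congr 1
  ring

theorem Nat.two_pow_clog_le (n : ℕ) : 2 ^ Nat.clog 2 n ≤ 2 * max n 1 := by
  rcases le_or_gt n 1 with hn | hn
  · simp only [Nat.clog_of_right_le_one hn, pow_zero]
    omega
  · have := Nat.pow_pred_clog_lt_self one_lt_two hn
    have := Nat.clog_pos one_lt_two hn
    rw [← Nat.succ_pred_eq_of_pos this, pow_succ]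
    omega

theorem Real.mul_log_sub_log_le_two {x y : ℝ} (hx : 1 ≤ x) (hxy : x ≤ y) (hyx : y ≤ x + 1) :
    y * (Real.log y - Real.log x) ≤ 2 := by
  have hx0 : 0 < x := by linarith
  have hlog : Real.log y - Real.log x ≤ y / x - 1 := by
    rw [← Real.log_div (by linarith) hx0.ne']
    exact Real.log_le_sub_one_of_pos (div_pos (by linarith) hx0)
  have hratio : y / x - 1 ≤ 1 / x := by
    rw [div_sub_one hx0.ne']
    gcongr
    linarith
  calc y * (Real.log y - Real.log x) ≤ y * (1 / x) :=
        mul_le_mul_of_nonneg_left (hlog.trans hratio) (by linarith)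
    _ ≤ 2 := by
        rw [mul_one_div, div_le_iff₀ hx0]
        linarith

theorem max_one_mul_abs_log_sub_log_le_two {k n : ℕ} (hk : k ≤ n + 1) (hn : n ≤ k + 1) :
    (max n 1 : ℕ) * |Real.log k - Real.log n| ≤ 2 := by
  rcases Nat.eq_zero_or_pos k with rfl | hk0
  · interval_cases n <;> simp
  rcases Nat.eq_zero_or_pos n with rfl | hn0
  · interval_cases k; simp
  rw [max_eq_left hn0]
  rcases le_total k n with h | h
  · rw [abs_sub_comm, abs_of_nonneg (sub_nonneg.2 (Real.log_le_log (by positivity) (by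
      exact_mod_cast h)))]
    exact Real.mul_log_sub_log_le_two (by exact_mod_cast hk0) (by exact_mod_cast h)
      (by exact_mod_cast hn)
  · have hlog : 0 ≤ Real.log k - Real.log n :=
      sub_nonneg.2 (Real.log_le_log (by positivity) (by exact_mod_cast h))
    rw [abs_of_nonneg hlog]
    calc (n : ℝ) * (Real.log k - Real.log n) ≤ k * (Real.log k - Real.log n) :=
          mul_le_mul_of_nonneg_right (by exact_mod_cast h) hlog
      _ ≤ 2 := Real.mul_log_sub_log_le_two (by exact_mod_cast hn0) (by exact_mod_cast h)
          (by exact_mod_cast hk)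

theorem two_pow_clog_mul_abs_logCutoff_sub_le {R : ℝ} (hR : 1 < R) {k n : ℕ}
    (hk : k ≤ n + 1) (hn : n ≤ k + 1) :
    2 ^ Nat.clog 2 n * |logCutoff R n - logCutoff R k| ≤ 4 / Real.log R := by
  have hL := Real.log_pos hR
  have hpow : (2 : ℝ) ^ Nat.clog 2 n ≤ 2 * (max n 1 : ℕ) := by exact_mod_cast Nat.two_pow_clog_le n
  have hlog := max_one_mul_abs_log_sub_log_le_two hk hn
  rw [abs_sub_comm] at hlog
  calc 2 ^ Nat.clog 2 n * |logCutoff R n - logCutoff R k|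
      ≤ (2 * (max n 1 : ℕ)) * (|Real.log n - Real.log k| / Real.log R) :=
        mul_le_mul hpow (abs_logCutoff_sub_le hR n k) (abs_nonneg _) (by positivity)
    _ ≤ 4 / Real.log R := by
        rw [mul_div_assoc', mul_assoc]
        gcongr
        linarith

namespace SimpleGraph

variable {V : Type*} {G : SimpleGraph V}

theorem Connected.finite_setOf_dist_le [G.LocallyFinite] (hconn : G.Connected) (a : V) :
    ∀ n : ℕ, {v | G.dist a v ≤ n}.Finite
  | 0 => (Set.finite_singleton a).subset fun v hv => by
      simpa [eq_comm] using hconn.dist_eq_zero_iff.1 (Nat.le_zero.1 hv)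
  | n + 1 => by
    refine (((hconn.finite_setOf_dist_le a n).biUnion fun y _ => (G.neighborSet y).toFinite).union
      (hconn.finite_setOf_dist_le a n)).subset fun v hv => ?_
    obtain ⟨p, hp⟩ := hconn.exists_walk_length_eq_dist v a
    cases p with
    | nil => exact Or.inr (by simp)
    | @cons _ y _ hvy q =>
      rw [Set.mem_ofPred_eq, dist_comm, ← hp, Walk.length_cons] at hv
      have hy : G.dist a y ≤ n := by
        rw [dist_comm]
        exact (G.dist_le q).trans (by omega)
      exact Or.inl (Set.mem_biUnion hy hvy.symm)

theorem Connected.eq_of_forall_adj_eq {α : Type*} (hconn : G.Connected) (f : V → α)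
    (h : ∀ v w, G.Adj v w → f v = f w) (v w : V) : f v = f w := by
  obtain ⟨p⟩ := hconn v w
  induction p with
  | nil => rfl
  | cons hadj _ ih => exact (h _ _ hadj).trans ih

variable (G) [G.LocallyFinite]

def IsSuperharmonic (η : V → V → ℝ) (u : V → ℝ) : Prop :=
  ∀ v, ∑ w ∈ G.neighborFinset v, η v w * (u w - u v) ≤ 0

def energyOn (η : V → V → ℝ) (F : Finset V) (φ : V → ℝ) : ℝ :=
  ∑ v ∈ F, ∑ w ∈ G.neighborFinset v, η v w * (φ v - φ w) ^ 2

theorem sum_neighborFinset_comm {M : Type*} [AddCommMonoid M]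
    (F : Finset V) (h : V → V → M)
    (hF : ∀ v ∈ F, ∀ w, G.Adj v w → w ∉ F → h v w = 0 ∧ h w v = 0) :
    ∑ v ∈ F, ∑ w ∈ G.neighborFinset v, h v w = ∑ v ∈ F, ∑ w ∈ G.neighborFinset v, h w v := by
  classical
  have restrict : ∀ h' : V → V → M, (∀ v ∈ F, ∀ w, G.Adj v w → w ∉ F → h' v w = 0) →
      ∑ v ∈ F, ∑ w ∈ G.neighborFinset v, h' v w =
        ∑ v ∈ F, ∑ w ∈ F, if G.Adj v w then h' v w else 0 := by
    refine fun h' hh' => sum_congr rfl fun v hv => ?_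
    rw [← sum_filter]
    refine (sum_subset (fun w hw => (G.mem_neighborFinset v w).2 (mem_filter.1 hw).2)
      fun w hw hwF => hh' v hv w ((G.mem_neighborFinset v w).1 hw) fun hw' => hwF ?_).symm
    exact mem_filter.2 ⟨hw', (G.mem_neighborFinset v w).1 hw⟩
  rw [restrict h fun v hv w hw hwF => (hF v hv w hw hwF).1,
    restrict (fun v w => h w v) fun v hv w hw hwF => (hF v hv w hw hwF).2, sum_comm]
  simp only [adj_comm]

theorem sum_picone_le_energyOn {η : V → V → ℝ}
    (hsymm : ∀ v w, η v w = η w v) {u : V → ℝ} (hu : ∀ v, 0 < u v)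
    (hsuper : G.IsSuperharmonic η u) (F : Finset V) (φ : V → ℝ)
    (hφ : ∀ v ∈ F, ∀ w, G.Adj v w → w ∉ F → φ v = 0 ∧ φ w = 0) :
    ∑ v ∈ F, ∑ w ∈ G.neighborFinset v, η v w * ((φ v * u w - φ w * u v) ^ 2 / (u v * u w)) ≤
      G.energyOn η F φ := by
  set f : V → ℝ := fun v => φ v ^ 2 / u v
  have hpoint : ∀ v w, (φ v - φ w) ^ 2 - (φ v * u w - φ w * u v) ^ 2 / (u v * u w) =
      f v * (u v - u w) + f w * (u w - u v) := by
    intro v w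
    have := (hu v).ne'
    have := (hu w).ne'
    simp only [f]
    field_simp
    ring
  have hswap : ∑ v ∈ F, ∑ w ∈ G.neighborFinset v, η v w * (f w * (u w - u v)) =
      ∑ v ∈ F, ∑ w ∈ G.neighborFinset v, η v w * (f v * (u v - u w)) := by
    rw [G.sum_neighborFinset_comm F]
    · simp only [hsymm]
    · intro v _ w _ hwF
      obtain ⟨hv, hw⟩ := hφ v ‹_› w ‹_› hwF
      simp [f, hv, hw]
  have hvertex : ∀ v, 0 ≤ ∑ w ∈ G.neighborFinset v, η v w * (f v * (u v - u w)) := by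
    intro v
    have : ∑ w ∈ G.neighborFinset v, η v w * (f v * (u v - u w)) =
        -(f v * ∑ w ∈ G.neighborFinset v, η v w * (u w - u v)) := by
      rw [mul_sum, ← sum_neg_distrib]
      exact sum_congr rfl fun w _ => by ring
    rw [this, neg_nonneg]
    exact mul_nonpos_of_nonneg_of_nonpos (by have := hu v; positivity) (hsuper v)
  have hdiff : G.energyOn η F φ - ∑ v ∈ F, ∑ w ∈ G.neighborFinset v,
      η v w * ((φ v * u w - φ w * u v) ^ 2 / (u v * u w)) =
      2 * ∑ v ∈ F, ∑ w ∈ G.neighborFinset v, η v w * (f v * (u v - u w)) := by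
    simp only [energyOn, ← sum_sub_distrib, ← mul_sub, hpoint, mul_add, sum_add_distrib, hswap]
    ring
  linarith [sum_nonneg fun v (_ : v ∈ F) => hvertex v]

theorem le_energyOn_of_adj {η : V → V → ℝ}
    (hsymm : ∀ v w, η v w = η w v) (hη : ∀ v w, G.Adj v w → 0 ≤ η v w) {u : V → ℝ}
    (hu : ∀ v, 0 < u v) (hsuper : G.IsSuperharmonic η u) (F : Finset V) (φ : V → ℝ)
    (hφ : ∀ v ∈ F, ∀ w, G.Adj v w → w ∉ F → φ v = 0 ∧ φ w = 0) {a b : V} (ha : a ∈ F)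
    (hab : G.Adj a b) :
    η a b * ((φ a * u b - φ b * u a) ^ 2 / (u a * u b)) ≤ G.energyOn η F φ := by
  have hterm : ∀ v w, G.Adj v w → 0 ≤ η v w * ((φ v * u w - φ w * u v) ^ 2 / (u v * u w)) :=
    fun v w hvw => mul_nonneg (hη v w hvw) (by have := hu v; have := hu w; positivity)
  refine le_trans ?_ (G.sum_picone_le_energyOn hsymm hu hsuper F φ hφ)
  refine le_trans ?_ (single_le_sum (fun v _ => sum_nonneg fun w hw =>
    hterm v w ((G.mem_neighborFinset v w).1 hw)) ha)
  exact single_le_sum (fun w hw => hterm a w ((G.mem_neighborFinset a w).1 hw))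
    ((G.mem_neighborFinset a b).2 hab)

theorem sum_clog_dist_eq_logCutoff_le {η : V → V → ℝ} (hη : ∀ v w, G.Adj v w → 0 ≤ η v w)
    {a : V} {C' : ℝ} (hvol : ∀ n : ℕ, 1 ≤ n → ∀ s : Finset V, (∀ w ∈ s, G.dist a w ≤ n) →
      ∑ x ∈ s, ∑ w ∈ G.neighborFinset x, η x w ≤ C' * (n : ℝ) ^ 2)
    {R : ℝ} (hR : 1 < R) (F : Finset V) (k : ℕ) :
    ∑ v ∈ F with Nat.clog 2 (G.dist a v) = k, ∑ w ∈ G.neighborFinset v,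
      η v w * (logCutoff R (G.dist a v) - logCutoff R (G.dist a w)) ^ 2 ≤
        16 * C' / Real.log R ^ 2 := by
  set L := Real.log R
  set φ : V → ℝ := fun v => logCutoff R (G.dist a v)
  have hL : 0 < L := Real.log_pos hR
  have hedge : ∀ v w, G.Adj v w →
      (φ v - φ w) ^ 2 ≤ (4 / L) ^ 2 / (2 ^ Nat.clog 2 (G.dist a v)) ^ 2 := by
    intro v w hvw
    have := two_pow_clog_mul_abs_logCutoff_sub_le hR (k := G.dist a w) (n := G.dist a v)
      (by rcases hvw.diff_dist_adj (u := a) with h | h | h <;> omega)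
      (by rcases hvw.diff_dist_adj (u := a) with h | h | h <;> omega)
    rw [le_div_iff₀ (by positivity), ← sq_abs, ← mul_pow, mul_comm]
    exact pow_le_pow_left₀ (by positivity) this 2
  set s := F.filter fun v => Nat.clog 2 (G.dist a v) = k
  calc ∑ v ∈ s, ∑ w ∈ G.neighborFinset v, η v w * (φ v - φ w) ^ 2
      ≤ ∑ v ∈ s, ∑ w ∈ G.neighborFinset v, η v w * ((4 / L) ^ 2 / (2 ^ k) ^ 2) := by
        refine sum_le_sum fun v hv => sum_le_sum fun w hw => ?_
        rw [mem_neighborFinset] at hw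
        rw [← (mem_filter.1 hv).2]
        exact mul_le_mul_of_nonneg_left (hedge v w hw) (hη v w hw)
    _ = (4 / L) ^ 2 / (2 ^ k) ^ 2 * ∑ v ∈ s, ∑ w ∈ G.neighborFinset v, η v w := by
        simp only [mul_sum, mul_comm]
    _ ≤ (4 / L) ^ 2 / (2 ^ k) ^ 2 * (C' * ((2 ^ k : ℕ) : ℝ) ^ 2) := by
        refine mul_le_mul_of_nonneg_left (hvol _ Nat.one_le_two_pow s fun v hv => ?_)
          (by positivity)
        rw [← (mem_filter.1 hv).2]
        exact Nat.le_pow_clog one_lt_two _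
    _ = 16 * C' / L ^ 2 := by
        push_cast
        field_simp
        ring

theorem energyOn_logCutoff_le {η : V → V → ℝ} (hη : ∀ v w, G.Adj v w → 0 ≤ η v w) {a : V}
    {C' : ℝ} (hvol : ∀ n : ℕ, 1 ≤ n → ∀ s : Finset V, (∀ w ∈ s, G.dist a w ≤ n) →
      ∑ x ∈ s, ∑ w ∈ G.neighborFinset x, η x w ≤ C' * (n : ℝ) ^ 2)
    (hC' : 0 ≤ C') {m : ℕ} (hm : 1 ≤ m) (F : Finset V) (hF : ∀ v ∈ F, G.dist a v ≤ 2 ^ m) :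
    G.energyOn η F (fun v => logCutoff (2 ^ m) (G.dist a v)) ≤
      32 * C' / Real.log 2 ^ 2 / m := by
  have hR : (1 : ℝ) < 2 ^ m := one_lt_pow₀ one_lt_two (by omega)
  have hm' : (1 : ℝ) ≤ m := by exact_mod_cast hm
  have hmaps : ∀ v ∈ F, Nat.clog 2 (G.dist a v) ∈ range (m + 1) := fun v hv =>
    mem_range_succ_iff.2 (Nat.clog_le_of_le_pow (hF v hv))
  rw [energyOn, ← sum_fiberwise_of_maps_to hmaps]
  calc _ ≤ ∑ _k ∈ range (m + 1), 16 * C' / Real.log (2 ^ m) ^ 2 :=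
        sum_le_sum fun k _ => G.sum_clog_dist_eq_logCutoff_le hη hvol hR F k
    _ = (m + 1) * (16 * C') / (Real.log 2 ^ 2 * m * m) := by
        simp only [sum_const, card_range, nsmul_eq_mul, Real.log_pow]
        push_cast
        ring
    _ ≤ 2 * m * (16 * C') / (Real.log 2 ^ 2 * m * m) := by gcongr; linarith
    _ = 32 * C' / Real.log 2 ^ 2 / m := by
        field_simp
        ring

variable {G} in
theorem Connected.mul_sq_sub_div_mul_le (hconn : G.Connected) {η : V → V → ℝ}
    (hsymm : ∀ v w, η v w = η w v) (hη : ∀ v w, G.Adj v w → 0 ≤ η v w) {a : V} {C' : ℝ}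
    (hC' : 0 ≤ C') (hvol : ∀ n : ℕ, 1 ≤ n → ∀ s : Finset V, (∀ w ∈ s, G.dist a w ≤ n) →
      ∑ x ∈ s, ∑ w ∈ G.neighborFinset x, η x w ≤ C' * (n : ℝ) ^ 2)
    {u : V → ℝ} (hu : ∀ v, 0 < u v) (hsuper : G.IsSuperharmonic η u) {b : V} (hab : G.Adj a b)
    {m : ℕ} (hm : 1 ≤ m) :
    η a b * ((u b - u a) ^ 2 / (u a * u b)) ≤ 32 * C' / Real.log 2 ^ 2 / m := by
  set F := (hconn.finite_setOf_dist_le a (2 ^ m)).toFinset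
  have hF : ∀ v, v ∈ F ↔ G.dist a v ≤ 2 ^ m := fun v => Set.Finite.mem_toFinset _
  set φ : V → ℝ := fun v => logCutoff (2 ^ m) (G.dist a v)
  have hR : (1 : ℝ) < 2 ^ m := one_lt_pow₀ one_lt_two (by omega)
  have hφ : ∀ v ∈ F, ∀ w, G.Adj v w → w ∉ F → φ v = 0 ∧ φ w = 0 := by
    intro v _ w hvw hw
    rw [hF, not_le] at hw
    have := hvw.diff_dist_adj (u := a)
    exact ⟨logCutoff_of_le hR (by exact_mod_cast (by omega : 2 ^ m ≤ G.dist a v)),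
      logCutoff_of_le hR (by exact_mod_cast hw.le)⟩
  have hφa : φ a = 1 := logCutoff_of_le_one _ (n := G.dist a a) (by simp)
  have hφb : φ b = 1 := logCutoff_of_le_one _ (n := G.dist a b) (dist_eq_one_iff_adj.2 hab).le
  calc η a b * ((u b - u a) ^ 2 / (u a * u b))
      = η a b * ((φ a * u b - φ b * u a) ^ 2 / (u a * u b)) := by rw [hφa, hφb, one_mul, one_mul]
    _ ≤ G.energyOn η F φ := G.le_energyOn_of_adj hsymm hη hu hsuper F φ hφ ((hF a).2 (by simp)) hab
    _ ≤ 32 * C' / Real.log 2 ^ 2 / m :=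
        G.energyOn_logCutoff_le hη hvol hC' hm F fun v hv => (hF v).1 hv

end SimpleGraph

theorem stmt_11_general {V : Type*} (G : SimpleGraph V)
    [G.LocallyFinite] (hconn : G.Connected)
    (η : V → V → ℝ)
    (hsymm : ∀ v w, η v w = η w v)
    (hpos : ∀ v w, G.Adj v w → 0 < η v w)
    (C' : ℝ) (hC' : 0 < C')
    (hvol : ∀ (v : V) (n : ℕ), 1 ≤ n → ∀ s : Finset V,
      (∀ w ∈ s, G.dist v w ≤ n) →
      ∑ x ∈ s, ∑ w ∈ G.neighborFinset x, η x w ≤ C' * (n : ℝ) ^ 2)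
    (u : V → ℝ) (hu : ∀ v, 0 < u v)
    (hsuper : ∀ v, ∑ w ∈ G.neighborFinset v, η v w * (u w - u v) ≤ 0) :
    ∀ v w, u v = u w := by
  refine hconn.eq_of_forall_adj_eq u fun a b hab => ?_
  by_contra hne
  have hdefect_pos : 0 < η a b * ((u b - u a) ^ 2 / (u a * u b)) :=
    mul_pos (hpos a b hab) (div_pos (pow_two_pos_of_ne_zero (sub_ne_zero.2 (Ne.symm hne)))
      (mul_pos (hu a) (hu b)))
  have hdefect_nonpos : η a b * ((u b - u a) ^ 2 / (u a * u b)) ≤ 0 :=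
    ge_of_tendsto (tendsto_const_div_atTop_nhds_zero_nat _) (eventually_atTop.2 ⟨1, fun m hm =>
      hconn.mul_sq_sub_div_mul_le hsymm (fun v w h => (hpos v w h).le) hC'.le (hvol a) hu hsuper
        hab hm⟩)
  exact hdefect_nonpos.not_gt hdefect_pos

/-- Liouville theorem: on a connected weighted graph with uniformly bounded positive
symmetric edge weights, uniformly bounded degrees, and quadratic volume growth of balls,
every positive superharmonic function is constant. -/
theorem stmt_11 {V : Type*} [DecidableEq V] (G : SimpleGraph V) [DecidableRel G.Adj]
    [G.LocallyFinite] (hconn : G.Connected)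
    (η : V → V → ℝ) (C : ℝ) (hC : 0 < C)
    (hsymm : ∀ v w, η v w = η w v)
    (hpos : ∀ v w, G.Adj v w → 0 < η v w)
    (hbd : ∀ v w, G.Adj v w → η v w ≤ C)
    (D : ℕ) (hdeg : ∀ v, G.degree v ≤ D)
    (C' : ℝ) (hC' : 0 < C')
    (hvol : ∀ (v : V) (n : ℕ), 1 ≤ n → ∀ s : Finset V,
      (∀ w ∈ s, G.dist v w ≤ n) →
      ∑ x ∈ s, ∑ w ∈ G.neighborFinset x, η x w ≤ C' * (n : ℝ) ^ 2)
    (u : V → ℝ) (hu : ∀ v, 0 < u v)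
    (hsuper : ∀ v, ∑ w ∈ G.neighborFinset v, η v w * (u w - u v) ≤ 0) :
    ∀ v w, u v = u w :=
  stmt_11_general G hconn η hsymm hpos C' hC' hvol u hu hsuper
end

section
/- The only univalent Doyle spiral is the regular hexagonal packing: if r_{m,n} = r0 · x^m · y^n defines a circle packing of the hexagonal lattice in which all circles have pairwise disjoint interiors, then x = y = 1. -/
open Real

/-- The six neighbor displacements of the hexagonal lattice. -/
def hexDeltas : Finset (ℤ × ℤ) := {(1, 0), (-1, 0), (0, 1), (0, -1), (1, -1), (-1, 1)}

lemma hexDeltas_neg : ∀ a b : ℤ, (a, b) ∈ hexDeltas → (-a, -b) ∈ hexDeltas := by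
  intro a b h
  simp only [hexDeltas, Finset.mem_insert, Finset.mem_singleton, Prod.mk.injEq] at h ⊢
  rcases h with ⟨rfl, rfl⟩ | ⟨rfl, rfl⟩ | ⟨rfl, rfl⟩ | ⟨rfl, rfl⟩ | ⟨rfl, rfl⟩ | ⟨rfl, rfl⟩ <;>
    norm_num

lemma hexDeltas_swap : ∀ a b : ℤ, (a, b) ∈ hexDeltas → (b, a) ∈ hexDeltas := by
  intro a b h
  simp only [hexDeltas, Finset.mem_insert, Finset.mem_singleton, Prod.mk.injEq] at h ⊢
  rcases h with ⟨rfl, rfl⟩ | ⟨rfl, rfl⟩ | ⟨rfl, rfl⟩ | ⟨rfl, rfl⟩ | ⟨rfl, rfl⟩ | ⟨rfl, rfl⟩ <;>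
    norm_num

/-- Core contradiction: a Doyle spiral packing with `x > 1` cannot have all circles
pairwise disjoint. -/
lemma doyle_core (r0 x y : ℝ) (hr0 : 0 < r0) (hx : 1 < x) (hy : 0 < y)
    (r : ℤ × ℤ → ℝ) (hr : ∀ v : ℤ × ℤ, r v = r0 * x ^ v.1 * y ^ v.2)
    (c : ℤ × ℤ → ℂ)
    (htangent : ∀ v w : ℤ × ℤ, (w.1 - v.1, w.2 - v.2) ∈ hexDeltas →
      dist (c v) (c w) = r v + r w)
    (hdisjoint : ∀ v w : ℤ × ℤ, v ≠ w → r v + r w ≤ dist (c v) (c w)) : False := by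
  have hx0 : (0:ℝ) < x := lt_trans one_pos hx
  have hxne : x ≠ 0 := ne_of_gt hx0
  have hx1 : (0:ℝ) < x - 1 := by linarith
  -- horizontal tangency step
  have hstepH : ∀ m n : ℤ, dist (c (m, n)) (c (m + 1, n)) = r0 * y ^ n * (x ^ m + x ^ (m+1)) := by
    intro m n
    have hmem : (((m+1, n) : ℤ × ℤ).1 - ((m, n) : ℤ × ℤ).1,
        ((m+1, n) : ℤ × ℤ).2 - ((m, n) : ℤ × ℤ).2) ∈ hexDeltas := by
      have h1 : ((m+1, n) : ℤ × ℤ).1 - ((m, n) : ℤ × ℤ).1 = (1:ℤ) := by dsimp only; ring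
      have h2 : ((m+1, n) : ℤ × ℤ).2 - ((m, n) : ℤ × ℤ).2 = (0:ℤ) := by dsimp only; ring
      rw [h1, h2]; decide
    calc dist (c (m, n)) (c (m + 1, n)) = r (m, n) + r (m+1, n) := htangent _ _ hmem
    _ = r0 * y ^ n * (x ^ m + x ^ (m+1)) := by rw [hr, hr]; dsimp only; ring
  -- vertical tangency step
  have hstepV : ∀ m n : ℤ, dist (c (m, n)) (c (m, n + 1)) = r0 * x ^ m * (y ^ n + y ^ (n+1)) := by
    intro m n
    have hmem : (((m, n+1) : ℤ × ℤ).1 - ((m, n) : ℤ × ℤ).1,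
        ((m, n+1) : ℤ × ℤ).2 - ((m, n) : ℤ × ℤ).2) ∈ hexDeltas := by
      have h1 : ((m, n+1) : ℤ × ℤ).1 - ((m, n) : ℤ × ℤ).1 = (0:ℤ) := by dsimp only; ring
      have h2 : ((m, n+1) : ℤ × ℤ).2 - ((m, n) : ℤ × ℤ).2 = (1:ℤ) := by dsimp only; ring
      rw [h1, h2]; decide
    calc dist (c (m, n)) (c (m, n + 1)) = r (m, n) + r (m, n+1) := htangent _ _ hmem
    _ = r0 * x ^ m * (y ^ n + y ^ (n+1)) := by rw [hr, hr]; dsimp only; ring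
  -- horizontal path bound
  have horiz : ∀ (k : ℕ) (M n : ℤ),
      dist (c (M, n)) (c (M + (k:ℤ), n)) ≤
        r0 * y ^ n * (1+x) * (x ^ (M + (k:ℤ)) - x ^ M) / (x-1) := by
    intro k
    induction k with
    | zero => intro M n; simp
    | succ k ih =>
      intro M n
      have h4 : M + ((k+1 : ℕ) : ℤ) = (M + (k:ℤ)) + 1 := by push_cast; ring
      rw [h4]
      have htri := dist_triangle (c (M, n)) (c (M + (k:ℤ), n)) (c (M + (k:ℤ) + 1, n))
      have hs := hstepH (M + (k:ℤ)) n
      have hih := ih M n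
      have hz : x ^ (M + (k:ℤ) + 1) = x ^ (M + (k:ℤ)) * x := zpow_add_one₀ hxne _
      have heq : r0 * y ^ n * (1+x) * (x ^ (M + (k:ℤ)) - x ^ M) / (x-1)
          + r0 * y ^ n * (x ^ (M + (k:ℤ)) + x ^ (M + (k:ℤ) + 1))
          = r0 * y ^ n * (1+x) * (x ^ (M + (k:ℤ) + 1) - x ^ M) / (x-1) := by
        rw [hz]; field_simp; ring
      linarith
  -- vertical path bound (at column M, from row 0 to row i)
  have vert : ∀ i : ℕ, ∃ G : ℝ, 0 ≤ G ∧
      ∀ M : ℤ, dist (c (M, 0)) (c (M, (i:ℤ))) ≤ x ^ M * G := by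
    intro i
    induction i with
    | zero => exact ⟨0, le_refl 0, fun M => by simp⟩
    | succ i ih =>
      obtain ⟨G, hG0, hG⟩ := ih
      have hyi : (0:ℝ) < y ^ (i:ℤ) := zpow_pos hy _
      have hyi1 : (0:ℝ) < y ^ ((i:ℤ)+1) := zpow_pos hy _
      refine ⟨G + r0 * (y ^ (i:ℤ) + y ^ ((i:ℤ)+1)), by positivity, fun M => ?_⟩
      have h4 : ((i+1 : ℕ) : ℤ) = (i:ℤ) + 1 := by push_cast; ring
      rw [h4]
      have htri := dist_triangle (c (M, 0)) (c (M, (i:ℤ))) (c (M, (i:ℤ) + 1))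
      have hs := hstepV M (i:ℤ)
      have hGi := hG M
      have hexp : x ^ M * (G + r0 * (y ^ (i:ℤ) + y ^ ((i:ℤ)+1)))
          = x ^ M * G + r0 * x ^ M * (y ^ (i:ℤ) + y ^ ((i:ℤ)+1)) := by ring
      linarith
  -- witnesses: for each i, a column m i with radius in [r0, r0*x)
  have hw : ∀ i : ℕ, ∃ m : ℤ, 1 ≤ x ^ m * y ^ (i:ℤ) ∧ x ^ m * y ^ (i:ℤ) < x := by
    intro i
    obtain ⟨n, hn1, hn2⟩ := exists_mem_Ico_zpow (zpow_pos hy (i:ℤ)) hx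
    have hxn : (0:ℝ) < x ^ n := zpow_pos hx0 n
    have hd : x ^ (-n) * y ^ (i:ℤ) = y ^ (i:ℤ) / x ^ n := by
      rw [zpow_neg]; ring
    refine ⟨-n, ?_, ?_⟩
    · rw [hd, le_div_iff₀ hxn]; linarith
    · rw [hd, div_lt_iff₀ hxn]
      have h2 : y ^ (i:ℤ) < x ^ n * x := by rw [← zpow_add_one₀ hxne]; exact hn2
      linarith
  choose m hm1 hm2 using hw
  set vi : ℕ → ℤ × ℤ := fun i => (m i, (i:ℤ)) with hvi
  have hrv : ∀ i : ℕ, r (vi i) = r0 * (x ^ (m i) * y ^ (i:ℤ)) := by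
    intro i; rw [hr]; ring
  have hrlo : ∀ i : ℕ, r0 ≤ r (vi i) := by
    intro i; rw [hrv]; nlinarith [hm1 i]
  have hrhi : ∀ i : ℕ, r (vi i) ≤ r0 * x := by
    intro i; rw [hrv]; nlinarith [hm2 i]
  -- the half-diameter bound
  set K : ℝ := r0 * x * (1+x) / (x-1) with hK
  have hpiece : ∀ (j : ℕ) (M : ℤ), M ≤ m j →
      dist (c (M, (j:ℤ))) (c (vi j)) ≤ K := by
    intro j M hMj
    have hk0 : M + (((m j - M).toNat : ℕ) : ℤ) = m j := by
      rw [Int.toNat_of_nonneg (by linarith)]; ring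
    have hb := horiz (m j - M).toNat M (j:ℤ)
    rw [hk0] at hb
    refine le_trans hb ?_
    rw [hK]
    have hyj : (0:ℝ) < y ^ (j:ℤ) := zpow_pos hy _
    have hxM : (0:ℝ) < x ^ M := zpow_pos hx0 _
    have hprod : x ^ (m j) * y ^ (j:ℤ) < x := hm2 j
    have hnum : r0 * y ^ (j:ℤ) * (1+x) * (x ^ (m j) - x ^ M) ≤ r0 * x * (1+x) := by
      have e1 : (0:ℝ) < r0 * (1+x) := by positivity
      nlinarith [mul_pos e1 (mul_pos hyj hxM), mul_lt_mul_of_pos_left hprod e1]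
    exact (div_le_div_iff_of_pos_right hx1).mpr hnum
  set D : ℝ := 2 * K with hD
  -- all witness centers lie in a fixed closed ball
  have hdistB : ∀ i : ℕ, dist (c (vi 0)) (c (vi i)) ≤ D := by
    intro i
    obtain ⟨G, hG0, hG⟩ := vert i
    refine le_of_forall_pos_le_add (fun ε hε => ?_)
    have hG1 : (0:ℝ) < G + 1 := by linarith
    obtain ⟨k, hk⟩ := exists_pow_lt_of_lt_one (div_pos hε hG1) ((inv_lt_one₀ hx0).mpr hx)
    set M : ℤ := min (min (m 0) (m i)) (-(k:ℤ)) with hM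
    have hM0 : M ≤ m 0 := le_trans (min_le_left _ _) (min_le_left _ _)
    have hMi : M ≤ m i := le_trans (min_le_left _ _) (min_le_right _ _)
    have hMk : M ≤ -(k:ℤ) := min_le_right _ _
    have hp0 : dist (c (M, ((0:ℕ):ℤ))) (c (vi 0)) ≤ K := hpiece 0 M hM0
    have hpi : dist (c (M, (i:ℤ))) (c (vi i)) ≤ K := hpiece i M hMi
    have hcast0 : ((0:ℕ):ℤ) = (0:ℤ) := by norm_num
    rw [hcast0] at hp0
    -- middle piece
    have hmid : dist (c (M, 0)) (c (M, (i:ℤ))) < ε := by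
      have h1 := hG M
      have h2 : x ^ M ≤ x ^ (-(k:ℤ)) := zpow_le_zpow_right₀ (le_of_lt hx) hMk
      have h3 : x ^ (-(k:ℤ)) = (x⁻¹) ^ k := by
        rw [zpow_neg, zpow_natCast, inv_pow]
      have h4 : (0:ℝ) < (x⁻¹) ^ k := by positivity
      have h5 : x ^ M * G ≤ (x⁻¹) ^ k * (G + 1) := by
        have hxMpos : (0:ℝ) < x ^ M := zpow_pos hx0 _
        nlinarith [h2, h3.ge, h3.le]
      have h6 : (x⁻¹) ^ k * (G + 1) < (ε / (G + 1)) * (G + 1) := by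
        exact mul_lt_mul_of_pos_right hk hG1
      have h7 : (ε / (G + 1)) * (G + 1) = ε := by field_simp
      linarith
    have htri := dist_triangle4 (c (vi 0)) (c (M, 0)) (c (M, (i:ℤ))) (c (vi i))
    have hsym : dist (c (vi 0)) (c (M, 0)) = dist (c (M, 0)) (c (vi 0)) := dist_comm _ _
    rw [hD]
    linarith
  -- pigeonhole in the compact ball
  have hball : ∀ i : ℕ, c (vi i) ∈ Metric.closedBall (c (vi 0)) D := by
    intro i
    rw [Metric.mem_closedBall, dist_comm]
    exact hdistB i
  obtain ⟨t, htfin, htcov⟩ :=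
    Metric.totallyBounded_iff.mp
      (isCompact_closedBall (c (vi 0)) D).totallyBounded r0 hr0
  have hch : ∀ i : ℕ, ∃ z, z ∈ t ∧ c (vi i) ∈ Metric.ball z r0 := by
    intro i
    have h := htcov (hball i)
    simpa using h
  choose f hf1 hf2 using hch
  haveI : Finite t := htfin.to_subtype
  obtain ⟨i, j, hij, hfeq⟩ :=
    Finite.exists_ne_map_eq_of_infinite (fun i : ℕ => (⟨f i, hf1 i⟩ : t))
  have hfij : f i = f j := congrArg Subtype.val hfeq
  have hvij : vi i ≠ vi j := by
    intro h
    apply hij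
    have h2 := congrArg Prod.snd h
    exact Int.natCast_inj.mp h2
  have hge := hdisjoint (vi i) (vi j) hvij
  have hd1 : dist (c (vi i)) (f i) < r0 := Metric.mem_ball.mp (hf2 i)
  have hd2 : dist (c (vi j)) (f j) < r0 := Metric.mem_ball.mp (hf2 j)
  have htr : dist (c (vi i)) (c (vi j)) ≤ dist (c (vi i)) (f i) + dist (f i) (c (vi j)) :=
    dist_triangle _ _ _
  have hsw : dist (f i) (c (vi j)) = dist (c (vi j)) (f j) := by
    rw [hfij, dist_comm]
  have hli := hrlo i
  have hlj := hrlo j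
  linarith

/-- The only univalent Doyle spiral is the regular hexagonal packing: if the Doyle-spiral
radii `r_{m,n} = r0·x^m·y^n` admit centers `c` realizing a circle packing of the hexagonal
lattice (adjacent circles tangent) in which all circles have pairwise disjoint interiors,
then `x = y = 1`. -/
theorem stmt_19 (r0 x y : ℝ) (hr0 : 0 < r0) (hx : 0 < x) (hy : 0 < y)
    (r : ℤ × ℤ → ℝ) (hr : ∀ v : ℤ × ℤ, r v = r0 * x ^ v.1 * y ^ v.2)
    (c : ℤ × ℤ → ℂ)
    (htangent : ∀ v w : ℤ × ℤ, (w.1 - v.1, w.2 - v.2) ∈ hexDeltas →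
      dist (c v) (c w) = r v + r w)
    (hdisjoint : ∀ v w : ℤ × ℤ, v ≠ w → r v + r w ≤ dist (c v) (c w)) :
    x = 1 ∧ y = 1 := by
  constructor
  · by_contra hx1
    rcases lt_or_gt_of_ne hx1 with h | h
    · -- x < 1 : use the index negation symmetry, parameters (x⁻¹, y⁻¹)
      refine doyle_core r0 x⁻¹ y⁻¹ hr0 ((one_lt_inv₀ hx).mpr h) (inv_pos.mpr hy)
        (fun v => r (-v.1, -v.2)) ?_ (fun v => c (-v.1, -v.2)) ?_ ?_
      · intro v
        show r (-v.1, -v.2) = r0 * x⁻¹ ^ v.1 * y⁻¹ ^ v.2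
        rw [hr]
        dsimp only
        rw [zpow_neg, zpow_neg, ← inv_zpow, ← inv_zpow]
      · intro v w hm
        show dist (c (-v.1, -v.2)) (c (-w.1, -w.2)) = r (-v.1, -v.2) + r (-w.1, -w.2)
        apply htangent (-v.1, -v.2) (-w.1, -w.2)
        dsimp only
        have h1 : -w.1 - -v.1 = -(w.1 - v.1) := by ring
        have h2 : -w.2 - -v.2 = -(w.2 - v.2) := by ring
        rw [h1, h2]
        exact hexDeltas_neg _ _ hm
      · intro v w hvw
        show r (-v.1, -v.2) + r (-w.1, -w.2) ≤ dist (c (-v.1, -v.2)) (c (-w.1, -w.2))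
        refine hdisjoint _ _ (fun hc => hvw ?_)
        have h1 := congrArg Prod.fst hc
        have h2 := congrArg Prod.snd hc
        dsimp only at h1 h2
        exact Prod.ext (by omega) (by omega)
    · -- x > 1 : direct
      exact doyle_core r0 x y hr0 h hy r hr c htangent hdisjoint
  · by_contra hy1
    rcases lt_or_gt_of_ne hy1 with h | h
    · -- y < 1 : swap and negate indices, parameters (y⁻¹, x⁻¹)
      refine doyle_core r0 y⁻¹ x⁻¹ hr0 ((one_lt_inv₀ hy).mpr h) (inv_pos.mpr hx)
        (fun v => r (-v.2, -v.1)) ?_ (fun v => c (-v.2, -v.1)) ?_ ?_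
      · intro v
        show r (-v.2, -v.1) = r0 * y⁻¹ ^ v.1 * x⁻¹ ^ v.2
        rw [hr]
        dsimp only
        rw [zpow_neg, zpow_neg, ← inv_zpow, ← inv_zpow]
        ring
      · intro v w hm
        show dist (c (-v.2, -v.1)) (c (-w.2, -w.1)) = r (-v.2, -v.1) + r (-w.2, -w.1)
        apply htangent (-v.2, -v.1) (-w.2, -w.1)
        dsimp only
        have h1 : -w.2 - -v.2 = -(w.2 - v.2) := by ring
        have h2 : -w.1 - -v.1 = -(w.1 - v.1) := by ring
        rw [h1, h2]
        exact hexDeltas_neg _ _ (hexDeltas_swap _ _ hm)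
      · intro v w hvw
        show r (-v.2, -v.1) + r (-w.2, -w.1) ≤ dist (c (-v.2, -v.1)) (c (-w.2, -w.1))
        refine hdisjoint _ _ (fun hc => hvw ?_)
        have h1 := congrArg Prod.fst hc
        have h2 := congrArg Prod.snd hc
        dsimp only at h1 h2
        exact Prod.ext (by omega) (by omega)
    · -- y > 1 : swap indices, parameters (y, x)
      refine doyle_core r0 y x hr0 h hx
        (fun v => r (v.2, v.1)) ?_ (fun v => c (v.2, v.1)) ?_ ?_
      · intro v
        show r (v.2, v.1) = r0 * y ^ v.1 * x ^ v.2
        rw [hr]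
        dsimp only
        ring
      · intro v w hm
        show dist (c (v.2, v.1)) (c (w.2, w.1)) = r (v.2, v.1) + r (w.2, w.1)
        apply htangent (v.2, v.1) (w.2, w.1)
        dsimp only
        exact hexDeltas_swap _ _ hm
      · intro v w hvw
        show r (v.2, v.1) + r (w.2, w.1) ≤ dist (c (v.2, v.1)) (c (w.2, w.1))
        refine hdisjoint _ _ (fun hc => hvw ?_)
        have h1 := congrArg Prod.fst hc
        have h2 := congrArg Prod.snd hc
        dsimp only at h1 h2
        exact Prod.ext h2 h1
end
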